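/- arXiv:2109.02743 — 5 statements merged into one kernel-verified Lean document; each statement's English description precedes it below -/
import Mathlib

section
/- Let A be a commutative semi-automaton and S, T two strongly connected components, u a word. Then either δ(S, u) ∩ T = ∅ or δ(S, u) ⊆ T. -/
/-- The action of a complete deterministic semi-automaton, extended to words. -/
def run {Q A : Type*} (δ : Q → A → Q) (q : Q) (w : List A) : Q := w.foldl δ q

/-- State `t` is reachable from `s`. -/
def Reach {Q A : Type*} (δ : Q → A → Q) (s t : Q) : Prop := ∃ u : List A, run δ s u = t

/-- `S` is a strongly connected component: a maximal set of pairwise connected states. -/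
def IsSCC {Q A : Type*} (δ : Q → A → Q) (S : Set Q) : Prop :=
  S.Nonempty ∧ (∀ s ∈ S, ∀ t ∈ S, Reach δ s t) ∧
    ∀ q : Q, (∀ s ∈ S, Reach δ s q ∧ Reach δ q s) → q ∈ S

lemma run_step_comm {Q A : Type*} (δ : Q → A → Q)
    (hcomm : ∀ (q : Q) (a b : A), δ (δ q a) b = δ (δ q b) a)
    (w : List A) : ∀ (q : Q) (a : A), run δ (δ q a) w = δ (run δ q w) a := by
  induction w with
  | nil => intro q a; rfl
  | cons b w ih => intro q a; simp only [run, List.foldl_cons] at *; rw [hcomm, ih]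

lemma run_comm {Q A : Type*} (δ : Q → A → Q)
    (hcomm : ∀ (q : Q) (a b : A), δ (δ q a) b = δ (δ q b) a)
    (u : List A) : ∀ (q : Q) (w : List A), run δ (run δ q u) w = run δ (run δ q w) u := by
  induction u with
  | nil => intro q w; rfl
  | cons a u ih =>
      intro q w
      show run δ (run δ (δ q a) u) w = run δ (δ (run δ q w) a) u
      rw [ih, run_step_comm δ hcomm]

lemma reach_trans {Q A : Type*} (δ : Q → A → Q) {a b c : Q}
    (h1 : Reach δ a b) (h2 : Reach δ b c) : Reach δ a c := by
  obtain ⟨u, hu⟩ := h1; obtain ⟨v, hv⟩ := h2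
  exact ⟨u ++ v, by simp [run, List.foldl_append, ← hu, ← hv]⟩

theorem image_disjoint_or_subset {Q A : Type*} [Fintype Q] (δ : Q → A → Q)
    (hcomm : ∀ (q : Q) (a b : A), δ (δ q a) b = δ (δ q b) a)
    (S T : Set Q) (hS : IsSCC δ S) (hT : IsSCC δ T) (u : List A) :
    (fun q => run δ q u) '' S ∩ T = ∅ ∨ (fun q => run δ q u) '' S ⊆ T := by
  by_cases h : (fun q => run δ q u) '' S ∩ T = ∅
  · exact Or.inl h
  · right
    obtain ⟨x, ⟨⟨s, hsS, hsx⟩, hxT⟩⟩ := Set.nonempty_iff_ne_empty.mpr h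
    rintro y ⟨s', hs'S, rfl⟩
    obtain ⟨_, hSconn, _⟩ := hS
    obtain ⟨_, hTconn, hTmax⟩ := hT
    -- x = run δ s u ∈ T; show run δ s' u ∈ T
    apply hTmax
    intro t htT
    have hxy : Reach δ x (run δ s' u) := by
      obtain ⟨w, hw⟩ := hSconn s hsS s' hs'S
      exact ⟨w, by rw [← hsx]; rw [run_comm δ hcomm, hw]⟩
    have hyx : Reach δ (run δ s' u) x := by
      obtain ⟨w, hw⟩ := hSconn s' hs'S s hsS
      exact ⟨w, by rw [← hsx]; rw [run_comm δ hcomm, hw]⟩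
    exact ⟨reach_trans δ (hTconn t htT x hxT) hxy,
           reach_trans δ hyx (hTconn x hxT t htT)⟩
end

section
/- Let A be a commutative semi-automaton and S a strongly connected component. Each letter x either permutes S (δ(S, x) = S) or maps every state of S outside S (δ(S, x) ∩ S = ∅). -/
theorem letter_permutes_or_maps_outside {Q A : Type*} [Fintype Q] (δ : Q → A → Q)
    (hcomm : ∀ (q : Q) (a b : A), δ (δ q a) b = δ (δ q b) a)
    (S : Set Q) (hS : IsSCC δ S) (x : A) :
    (fun q => δ q x) '' S = S ∨ (fun q => δ q x) '' S ∩ S = ∅ := by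
  -- letter commutes past words
  have L : ∀ (w : List A) (q : Q) (a : A), run δ (δ q a) w = δ (run δ q w) a := by
    intro w
    induction w with
    | nil => intro q a; rfl
    | cons b w ih =>
      intro q a
      show run δ (δ (δ q a) b) w = δ (run δ (δ q b) w) a
      rw [hcomm q a b, ih]
  have L2 : ∀ (u w : List A) (q : Q), run δ (run δ q u) w = run δ (run δ q w) u := by
    intro u
    induction u with
    | nil => intro w q; rfl
    | cons a u ih =>
      intro w q
      show run δ (run δ (δ q a) u) w = run δ (run δ q w) (a :: u)
      rw [ih w (δ q a)]
      show run δ (run δ (δ q a) w) u = run δ (δ (run δ q w) a) u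
      rw [L]
  have app : ∀ (v v' : List A) (q : Q), run δ q (v ++ v') = run δ (run δ q v) v' := by
    intro v v' q; simp [run, List.foldl_append]
  obtain ⟨hne, hconn, hmax⟩ := hS
  by_cases hmeet : ∃ s ∈ S, δ s x ∈ S
  · left
    obtain ⟨s, hsS, hpS⟩ := hmeet
    obtain ⟨w, hw⟩ := hconn _ hpS s hsS
    -- every state of S is sent into S, with a return word
    have hin : ∀ q ∈ S, δ q x ∈ S ∧ run δ (δ q x) w = q := by
      intro q hqS
      obtain ⟨u, hu⟩ := hconn s hsS q hqS
      have h1 : δ q x = run δ (δ s x) u := by rw [← hu, ← L]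
      have hback : run δ (δ q x) w = q := by
        rw [h1, L2, hw, hu]
      refine ⟨hmax _ (fun t htS => ⟨?_, ?_⟩), hback⟩
      · obtain ⟨v, hv⟩ := hconn t htS _ hpS
        exact ⟨v ++ u, by rw [app, hv, h1]⟩
      · obtain ⟨v, hv⟩ := hconn q hqS t htS
        exact ⟨w ++ v, by rw [app, hback, hv]⟩
    apply Set.Subset.antisymm
    · rintro _ ⟨q, hqS, rfl⟩
      exact (hin q hqS).1
    · -- surjectivity onto S
      intro q hqS
      obtain ⟨hqx, hback⟩ := hin q hqS
      have hrx : δ (run δ q w) x = q := by rw [← L, hback]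
      refine ⟨run δ q w, hmax _ (fun t htS => ⟨?_, ?_⟩), hrx⟩
      · obtain ⟨v, hv⟩ := hconn t htS q hqS
        exact ⟨v ++ w, by rw [app, hv]⟩
      · obtain ⟨v, hv⟩ := hconn q hqS t htS
        refine ⟨x :: v, ?_⟩
        show run δ (δ (run δ q w) x) v = t
        rw [hrx, hv]
  · right
    ext q
    simp only [Set.mem_inter_iff, Set.mem_image, Set.mem_empty_iff_false, iff_false]
    rintro ⟨⟨s, hsS, rfl⟩, hqS⟩
    exact hmeet ⟨s, hsS, hqS⟩
end

section
/- In a weakly acyclic complete automaton with n states, if a word u has at least n occurrences of some letter a, then there exists a word u' with |u'|_b = min(n−1, |u|_b) for each letter b such that u and u' lead to the same state from the initial state. -/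
/-!
Reading a letter `c` is a self-map of the `n` states all of whose periodic points are fixed
(weak acyclicity), so by pigeonhole its orbits become stationary after at most `n - 1` steps:
a block `c^k` acts like `c^(min (n - 1) k)`. By commutativity the state reached by `u` only
depends on the letter counts of `u`, so `u` may be rearranged into blocks `c^(|u|_c)`, each of
which is then cut down to length `min (n - 1) |u|_c`.
-/

namespace Function

variable {α : Type*} [Fintype α] {f : α → α}

theorem isFixedPt_iterate_card_sub_one (hf : periodicPts f ⊆ fixedPoints f) (x : α) :
    IsFixedPt f (f^[Fintype.card α - 1] x) := by
  by_contra hx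
  -- A repetition `f^[i] x = f^[j] x` with `i < j` makes `f^[i] x` periodic, hence fixed,
  -- and then so is every later point of the orbit.
  have hinj : Injective fun i : Fin (Fintype.card α + 1) => f^[i] x := by
    refine Injective.of_lt_imp_ne fun i j hij heq => hx ?_
    have hper : f^[i] x ∈ periodicPts f := by
      refine mem_periodicPts.2 ⟨j - i, Nat.sub_pos_of_lt hij, ?_⟩
      simp only [IsPeriodicPt, IsFixedPt, ← iterate_add_apply, Nat.sub_add_cancel hij.le]
      exact heq.symm
    obtain ⟨m, hm⟩ := Nat.exists_eq_add_of_le (show (i : ℕ) ≤ Fintype.card α - 1 by omega)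
    rw [hm, add_comm, iterate_add_apply, ((hf hper).iterate m).eq]
    exact hf hper
  simpa using Fintype.card_le_of_injective _ hinj

theorem iterate_min_card_sub_one (hf : periodicPts f ⊆ fixedPoints f) (x : α) (k : ℕ) :
    f^[min (Fintype.card α - 1) k] x = f^[k] x := by
  rcases le_total k (Fintype.card α - 1) with hk | hk
  · rw [min_eq_right hk]
  · rw [min_eq_left hk, ← Nat.sub_add_cancel hk, iterate_add_apply,
      ((isFixedPt_iterate_card_sub_one hf x).iterate _).eq]

end Function

namespace List

variable {A : Type*} [DecidableEq A]

theorem count_flatMap_replicate {L : List A} (hL : L.Nodup) (k : A → ℕ) (c : A) :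
    (L.flatMap fun b => replicate (k b) b).count c = if c ∈ L then k c else 0 := by
  induction L with
  | nil => simp
  | cons b L ih =>
    obtain ⟨hb, hL⟩ := nodup_cons.1 hL
    rw [flatMap_cons, count_append, ih hL, count_replicate]
    by_cases hcb : c = b
    · subst hcb; simp [hb]
    · simp [hcb, Ne.symm hcb]

theorem perm_flatMap_replicate_count {u L : List A} (hL : L.Nodup) (hu : u ⊆ L) :
    u.Perm (L.flatMap fun b => replicate (u.count b) b) := by
  refine perm_iff_count.2 fun c => ?_
  rw [count_flatMap_replicate hL]
  split_ifs with hc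
  · rfl
  · exact count_eq_zero.2 fun hcu => hc (hu hcu)

end List

open Function List

section Automaton

variable {Q A : Type*} (δ : Q → A → Q)

theorem run_append (q : Q) (u v : List A) : run δ q (u ++ v) = run δ (run δ q u) v :=
  foldl_append

theorem run_replicate (q : Q) (c : A) (k : ℕ) :
    run δ q (replicate k c) = (δ · c)^[k] q := by
  induction k generalizing q with
  | zero => rfl
  | succ k ih => rw [replicate_succ, iterate_succ_apply]; exact ih (δ q c)

theorem run_perm (hcomm : ∀ (q : Q) (a b : A), δ (δ q a) b = δ (δ q b) a) (q : Q)
    {u v : List A} (huv : u.Perm v) : run δ q u = run δ q v :=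
  haveI : RightCommutative δ := ⟨hcomm⟩
  huv.foldl_eq q

theorem periodicPts_subset_fixedPoints_of_weaklyAcyclic
    (hwa : ∀ (q : Q) (u v : List A) (x : A), run δ q (u ++ x :: v) = q → δ q x = q) (c : A) :
    periodicPts (δ · c) ⊆ fixedPoints (δ · c) := by
  rintro q ⟨k, hk, hq⟩
  obtain ⟨m, rfl⟩ := Nat.exists_eq_add_one_of_ne_zero hk.ne'
  refine hwa q [] (replicate m c) c ?_
  rw [← replicate_succ, nil_append, run_replicate]
  exact hq

variable [Fintype Q]

theorem run_flatMap_replicate_min (hfix : ∀ c, periodicPts (δ · c) ⊆ fixedPoints (δ · c))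
    (L : List A) (k : A → ℕ) (q : Q) :
    run δ q (L.flatMap fun b => replicate (min (Fintype.card Q - 1) (k b)) b) =
      run δ q (L.flatMap fun b => replicate (k b) b) := by
  induction L generalizing q with
  | nil => rfl
  | cons b L ih =>
    simp only [flatMap_cons, run_append, run_replicate, iterate_min_card_sub_one (hfix b), ih]

end Automaton

theorem weakly_acyclic_threshold_reduction_general {Q A : Type*} [Fintype Q] [DecidableEq A]
    (δ : Q → A → Q) (q0 : Q)
    (hcomm : ∀ (q : Q) (a b : A), δ (δ q a) b = δ (δ q b) a)
    (hwa : ∀ (q : Q) (u v : List A) (x : A), run δ q (u ++ x :: v) = q → δ q x = q)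
    (u : List A) (a : A) :
    ∃ u' : List A, (∀ b : A, u'.count b = min (Fintype.card Q - 1) (u.count b)) ∧
      run δ q0 u' = run δ q0 u := by
  refine ⟨u.dedup.flatMap fun b => replicate (min (Fintype.card Q - 1) (u.count b)) b, ?_, ?_⟩
  · intro b
    rw [count_flatMap_replicate (nodup_dedup u)]
    by_cases hb : b ∈ u
    · rw [if_pos (mem_dedup.2 hb)]
    · rw [if_neg (mt mem_dedup.1 hb), count_eq_zero.2 hb, min_zero]
  · rw [run_flatMap_replicate_min δ (periodicPts_subset_fixedPoints_of_weaklyAcyclic δ hwa),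
      run_perm δ hcomm q0 (perm_flatMap_replicate_count (nodup_dedup u) fun _ => mem_dedup.2)]

theorem weakly_acyclic_threshold_reduction {Q A : Type*} [Fintype Q] [DecidableEq A]
    (δ : Q → A → Q) (q0 : Q)
    (hcomm : ∀ (q : Q) (a b : A), δ (δ q a) b = δ (δ q b) a)
    (hwa : ∀ (q : Q) (u v : List A) (x : A), run δ q (u ++ x :: v) = q → δ q x = q)
    (u : List A) (a : A) (ha : Fintype.card Q ≤ u.count a) :
    ∃ u' : List A, (∀ b : A, u'.count b = min (Fintype.card Q - 1) (u.count b)) ∧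
      run δ q0 u' = run δ q0 u :=
  weakly_acyclic_threshold_reduction_general δ q0 hcomm hwa u a
end

section
/- A synchronizing commutative semi-automaton with n states admits a synchronizing word of length at most n − 1. -/
/-!
Take a shortest synchronizing word `w = a₁ ⋯ aₘ` and follow the images `Q·a₁⋯aⱼ`. If some letter
`aⱼ₊₁` acted injectively on `Q·a₁⋯aⱼ`, deleting it would still synchronize: by commutativity
`Q·w = (Q·a₁⋯aⱼaⱼ₊₂⋯aₘ)·aⱼ₊₁` and `Q·a₁⋯aⱼaⱼ₊₂⋯aₘ ⊆ Q·a₁⋯aⱼ`. So every letter shrinks the image,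
which starts with `n` states and ends with one, hence `m ≤ n - 1`.
-/

namespace Automaton

variable {Q A : Type*} (δ : Q → A → Q)

def IsCommutative : Prop := ∀ (q : Q) (a b : A), δ (δ q a) b = δ (δ q b) a

def Synchronizes (w : List A) : Prop := ∃ s : Q, ∀ q : Q, run δ q w = s

lemma run_append (q : Q) (u v : List A) : run δ q (u ++ v) = run δ (run δ q u) v :=
  List.foldl_append ..

lemma run_cons (q : Q) (a : A) (w : List A) : run δ q (a :: w) = run δ (δ q a) w := rfl

variable {δ}

lemma run_delta_comm (hcomm : IsCommutative δ) (q : Q) (a : A) (w : List A) :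
    run δ (δ q a) w = δ (run δ q w) a := by
  induction w generalizing q with
  | nil => rfl
  | cons b w ih => rw [run_cons, run_cons, hcomm q a b, ih]

lemma run_run_comm (hcomm : IsCommutative δ) (q : Q) (u v : List A) :
    run δ (run δ q u) v = run δ (run δ q v) u := by
  induction u generalizing q with
  | nil => rfl
  | cons a u ih => rw [run_cons, ih, run_delta_comm hcomm, run_cons]

variable (δ) [Fintype Q] [DecidableEq Q]

def runImage (w : List A) : Finset Q := Finset.univ.image (run δ · w)

lemma run_mem_runImage (q : Q) (w : List A) : run δ q w ∈ runImage δ w :=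
  Finset.mem_image_of_mem _ (Finset.mem_univ q)

@[simp]
lemma runImage_nil : runImage δ ([] : List A) = Finset.univ := by
  ext q
  simpa [runImage] using ⟨q, rfl⟩

lemma runImage_concat (w : List A) (a : A) :
    runImage δ (w ++ [a]) = (runImage δ w).image (δ · a) := by
  simp only [runImage, Finset.image_image]
  congr 1
  funext q
  exact run_append δ q w [a]

lemma Synchronizes.runImage_nonempty {w : List A} (h : Synchronizes δ w) :
    (runImage δ w).Nonempty :=
  let ⟨s, _⟩ := h
  ⟨_, run_mem_runImage δ s w⟩

variable {δ}

lemma Synchronizes.delete_of_injOn (hcomm : IsCommutative δ)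
    {u v : List A} {a : A} (hsync : Synchronizes δ (u ++ a :: v))
    (hinj : Set.InjOn (δ · a) (runImage δ u)) : Synchronizes δ (u ++ v) := by
  obtain ⟨s, hs⟩ := hsync
  have hmem (q : Q) : run δ q (u ++ v) ∈ runImage δ u := by
    rw [run_append, run_run_comm hcomm]
    exact run_mem_runImage δ _ u
  have hlast (q : Q) : δ (run δ q (u ++ v)) a = s := by
    rw [← hs q, run_append, run_append, run_cons, run_delta_comm hcomm]
  exact ⟨run δ s (u ++ v), fun q =>
    hinj (hmem q) (hmem s) ((hlast q).trans (hlast s).symm)⟩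

lemma card_runImage_take_succ_lt (hcomm : IsCommutative δ)
    {w : List A} (hsync : Synchronizes δ w)
    (hmin : ∀ w' : List A, Synchronizes δ w' → w.length ≤ w'.length)
    {j : ℕ} (hj : j < w.length) :
    (runImage δ (w.take (j + 1))).card < (runImage δ (w.take j)).card := by
  rw [← List.take_concat_get' w j hj, runImage_concat]
  refine Finset.card_image_le.lt_of_ne fun hcard => ?_
  have hsplit : w = w.take j ++ w[j] :: w.drop (j + 1) := by
    rw [← List.drop_eq_getElem_cons hj, List.take_append_drop]
  rw [hsplit] at hsync
  have hshorter := hmin _ (hsync.delete_of_injOn hcomm (Finset.injOn_of_card_image_eq hcard))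
  simp only [List.length_append, List.length_take, List.length_drop] at hshorter
  omega

lemma card_runImage_take_add_le (hcomm : IsCommutative δ)
    {w : List A} (hsync : Synchronizes δ w)
    (hmin : ∀ w' : List A, Synchronizes δ w' → w.length ≤ w'.length) :
    ∀ j ≤ w.length, (runImage δ (w.take j)).card + j ≤ Fintype.card Q
  | 0, _ => by simp
  | j + 1, hj => by
    have := card_runImage_take_succ_lt hcomm hsync hmin hj
    have := card_runImage_take_add_le hcomm hsync hmin j (by omega)
    omega

end Automaton

theorem commutative_short_sync_word {Q A : Type*} [Fintype Q] (δ : Q → A → Q)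
    (hcomm : ∀ (q : Q) (a b : A), δ (δ q a) b = δ (δ q b) a)
    (hsync : ∃ w : List A, ∃ s : Q, ∀ q : Q, run δ q w = s) :
    ∃ w : List A, w.length ≤ Fintype.card Q - 1 ∧ ∃ s : Q, ∀ q : Q, run δ q w = s := by
  classical
  let w := Function.argminOn List.length {w | Automaton.Synchronizes δ w} hsync
  have hw : Automaton.Synchronizes δ w := Function.argminOn_mem _ _ hsync
  have hmin (w' : List A) (hw' : Automaton.Synchronizes δ w') : w.length ≤ w'.length :=
    Function.argminOn_le List.length {w | Automaton.Synchronizes δ w} hw'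
  have hcount := Automaton.card_runImage_take_add_le hcomm hw hmin w.length le_rfl
  rw [List.take_length] at hcount
  have hpos := hw.runImage_nonempty.card_pos
  exact ⟨w, by omega, hw⟩
end

section
/- Let A be an automaton with simple idempotents over alphabet Σ, let Γ ⊆ Σ be the set of non-permutational simple idempotent letters, and let w be a synchronizing word for A with n states. Then Σ_{a∈Γ} |w|_a ≥ n − 1. -/
private lemma step_card {Q : Type*} [Fintype Q] [DecidableEq Q] (f : Q → Q)
    (hn : 0 < Fintype.card Q)
    (h : (Finset.univ.image f).card = Fintype.card Q - 1) (S : Finset Q) :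
    S.card ≤ (S.image f).card + 1 := by
  have hninj : ¬ Function.Injective f := by
    intro hinj
    have := Finset.card_image_of_injective (Finset.univ : Finset Q) hinj
    rw [h, Finset.card_univ] at this
    omega
  rw [Function.not_injective_iff] at hninj
  obtain ⟨x, y, hfxy, hxy⟩ := hninj
  have himg : (Finset.univ.erase x).image f = Finset.univ.image f := by
    apply Finset.Subset.antisymm (Finset.image_subset_image (Finset.erase_subset _ _))
    intro z hz
    simp only [Finset.mem_image, Finset.mem_erase, Finset.mem_univ, and_true, true_and] at hz ⊢
    obtain ⟨q, hq⟩ := hz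
    by_cases hqx : q = x
    · exact ⟨y, hxy.symm, by rw [← hfxy, ← hqx, hq]⟩
    · exact ⟨q, hqx, hq⟩
  have hinj : Set.InjOn f (Finset.univ.erase x) := by
    rw [← Finset.card_image_iff]
    rw [himg, h, Finset.card_erase_of_mem (Finset.mem_univ x), Finset.card_univ]
  have hinj2 : Set.InjOn f (S.erase x) := hinj.mono (by
    intro z hz
    simp only [Finset.coe_erase, Set.mem_diff] at hz ⊢
    exact ⟨by simp, hz.2⟩)
  have h1 : ((S.erase x).image f).card = (S.erase x).card :=
    Finset.card_image_iff.mpr hinj2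
  have h2 : (S.erase x).image f ⊆ S.image f :=
    Finset.image_subset_image (Finset.erase_subset _ _)
  have h3 := Finset.card_le_card h2
  have h4 : S.card ≤ (S.erase x).card + 1 := by
    by_cases hx : x ∈ S
    · rw [Finset.card_erase_of_mem hx]; omega
    · rw [Finset.erase_eq_of_notMem hx]; omega
  omega

private lemma aux_card {Q A : Type*} [Fintype Q] [DecidableEq Q] [DecidableEq A]
    (δ : Q → A → Q) (hn : 0 < Fintype.card Q)
    (hsi : ∀ a : A,
      (Finset.univ.image (fun q => δ q a) = (Finset.univ : Finset Q)) ∨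
      ((Finset.univ.image (fun q => δ q a)).card = Fintype.card Q - 1 ∧
        ∀ q : Q, δ (δ q a) a = δ q a))
    (Γ : Finset A)
    (hΓ : ∀ a : A, a ∈ Γ ↔
      (Finset.univ.image (fun q => δ q a) ≠ (Finset.univ : Finset Q) ∧
        (Finset.univ.image (fun q => δ q a)).card = Fintype.card Q - 1 ∧
        ∀ q : Q, δ (δ q a) a = δ q a)) :
    ∀ (w : List A) (S : Finset Q),
      S.card ≤ (S.image (fun q => run δ q w)).card + w.countP (· ∈ Γ) := by
  intro w
  induction w with
  | nil =>
    intro S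
    simp [run]
  | cons a w ih =>
    intro S
    have hrun : (fun q => run δ q (a :: w)) = (fun q => run δ q w) ∘ (fun q => δ q a) := by
      funext q; rfl
    rw [hrun, ← Finset.image_image]
    have hcount : (a :: w).countP (· ∈ Γ) = w.countP (· ∈ Γ) + if a ∈ Γ then 1 else 0 := by
      rw [List.countP_cons]; simp
    rw [hcount]
    by_cases haΓ : a ∈ Γ
    · obtain ⟨_, hcard, _⟩ := (hΓ a).mp haΓ
      have h1 := step_card (fun q => δ q a) hn hcard S
      have h2 := ih (S.image (fun q => δ q a))
      simp only [haΓ, if_true]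
      omega
    · -- a must be a permutation
      have hperm : Finset.univ.image (fun q => δ q a) = (Finset.univ : Finset Q) := by
        rcases hsi a with h | ⟨hcard, hid⟩
        · exact h
        · exfalso
          apply haΓ
          rw [hΓ]
          refine ⟨?_, hcard, hid⟩
          intro heq
          rw [heq, Finset.card_univ] at hcard
          omega
      have hsurj : Function.Surjective (fun q => δ q a) := by
        intro y
        have : y ∈ Finset.univ.image (fun q => δ q a) := by rw [hperm]; exact Finset.mem_univ y
        simpa using this
      have hinj : Function.Injective (fun q => δ q a) :=
        Finite.injective_iff_surjective.mpr hsurj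
      have h1 : (S.image (fun q => δ q a)).card = S.card :=
        Finset.card_image_of_injective S hinj
      have h2 := ih (S.image (fun q => δ q a))
      simp only [haΓ, if_false]
      omega

theorem sync_word_many_idempotent_letters {Q A : Type*} [Fintype Q] [DecidableEq Q] [DecidableEq A]
    (δ : Q → A → Q) (hn : 0 < Fintype.card Q)
    (hsi : ∀ a : A,
      (Finset.univ.image (fun q => δ q a) = (Finset.univ : Finset Q)) ∨
      ((Finset.univ.image (fun q => δ q a)).card = Fintype.card Q - 1 ∧
        ∀ q : Q, δ (δ q a) a = δ q a))
    (Γ : Finset A)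
    (hΓ : ∀ a : A, a ∈ Γ ↔
      (Finset.univ.image (fun q => δ q a) ≠ (Finset.univ : Finset Q) ∧
        (Finset.univ.image (fun q => δ q a)).card = Fintype.card Q - 1 ∧
        ∀ q : Q, δ (δ q a) a = δ q a))
    (w : List A) (hw : ∃ s : Q, ∀ q : Q, run δ q w = s) :
    Fintype.card Q - 1 ≤ ∑ a ∈ Γ, w.count a := by
  obtain ⟨s, hs⟩ := hw
  have hmain := aux_card δ hn hsi Γ hΓ w Finset.univ
  have himg : (Finset.univ.image (fun q => run δ q w)) ⊆ {s} := by
    intro z hz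
    simp only [Finset.mem_image, Finset.mem_univ, true_and] at hz
    obtain ⟨q, hq⟩ := hz
    simp [← hq, hs q]
  have hcard1 : (Finset.univ.image (fun q => run δ q w)).card ≤ 1 := by
    have := Finset.card_le_card himg
    simpa using this
  rw [Finset.card_univ] at hmain
  have hsum : ∀ v : List A, ∑ a ∈ Γ, v.count a = v.countP (· ∈ Γ) := by
    intro v
    induction v with
    | nil => simp
    | cons b v ih =>
      simp only [List.count_cons, List.countP_cons, Finset.sum_add_distrib, ih]
      congr 1
      simp only [beq_iff_eq, decide_eq_true_eq]
      rw [Finset.sum_ite_eq]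
  rw [hsum w]
  omega
end
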